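/- arXiv:2603.25592 — 7 statements merged into one kernel-verified Lean document; each statement's English description precedes it below -/
import Mathlib

section
/- The function F : (0,∞) → ℝ defined by F(u) := sup_{a>0} log(1 + u(1 − e^{−a})) / ( e^{a} (1 + u(1 − e^{−a})) ) is monotone increasing on (0,∞). -/
noncomputable def Fsup (u : ℝ) : ℝ :=
  sSup ((fun a : ℝ => Real.log (1 + u * (1 - Real.exp (-a))) /
      (Real.exp a * (1 + u * (1 - Real.exp (-a))))) '' Set.Ioi 0)

lemma Fsup_bdd {v : ℝ} (hv : 0 < v) :
    BddAbove ((fun a : ℝ => Real.log (1 + v * (1 - Real.exp (-a))) /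
      (Real.exp a * (1 + v * (1 - Real.exp (-a))))) '' Set.Ioi 0) := by
  refine ⟨1, ?_⟩
  rintro _ ⟨a, ha, rfl⟩
  have ha0 : (0:ℝ) < a := ha
  have hea : Real.exp (-a) < 1 := by
    rw [Real.exp_lt_one_iff]; linarith
  have ht : 0 < 1 - Real.exp (-a) := by linarith
  have hy : (1:ℝ) ≤ 1 + v * (1 - Real.exp (-a)) := by nlinarith
  have hy0 : (0:ℝ) < 1 + v * (1 - Real.exp (-a)) := by linarith
  have he1 : (1:ℝ) ≤ Real.exp a := Real.one_le_exp (le_of_lt ha0)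
  have hd : 0 < Real.exp a * (1 + v * (1 - Real.exp (-a))) := by positivity
  rw [div_le_one hd]
  have hl := Real.log_le_sub_one_of_pos hy0
  nlinarith

/-- F is monotone increasing on (0,∞). -/
theorem stmt_4 : MonotoneOn Fsup (Set.Ioi (0 : ℝ)) := by
  intro u hu v hv huv
  have hu0 : (0:ℝ) < u := hu
  have hv0 : (0:ℝ) < v := hv
  have hbdd := Fsup_bdd hv0
  -- sSup of the v-image is nonnegative: the value at a = 1 is nonnegative
  have hnonneg : 0 ≤ Fsup v := by
    have h1 : Real.exp (-(1:ℝ)) < 1 := by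
      rw [Real.exp_lt_one_iff]; norm_num
    have ht : 0 < 1 - Real.exp (-(1:ℝ)) := by linarith
    have hy : (1:ℝ) ≤ 1 + v * (1 - Real.exp (-(1:ℝ))) := by nlinarith
    have hval : 0 ≤ Real.log (1 + v * (1 - Real.exp (-(1:ℝ)))) /
        (Real.exp 1 * (1 + v * (1 - Real.exp (-(1:ℝ))))) := by
      apply div_nonneg (Real.log_nonneg hy)
      positivity
    exact hval.trans (le_csSup hbdd ⟨1, by norm_num, rfl⟩)
  apply Real.sSup_le _ hnonneg
  rintro _ ⟨a, ha, rfl⟩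
  have ha0 : (0:ℝ) < a := ha
  have hea : Real.exp (-a) < 1 := by rw [Real.exp_lt_one_iff]; linarith
  have hea0 : 0 < Real.exp (-a) := Real.exp_pos _
  have ht : 0 < 1 - Real.exp (-a) := by linarith
  have ht1 : 1 - Real.exp (-a) < 1 := by linarith
  set s : ℝ := u * (1 - Real.exp (-a)) / v with hs
  have hs0 : 0 < s := by positivity
  have hst : s ≤ 1 - Real.exp (-a) := by
    rw [hs, div_le_iff₀ hv0]; nlinarith
  have hs1 : s < 1 := lt_of_le_of_lt hst ht1
  set a' : ℝ := -Real.log (1 - s) with ha'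
  have h1s : 0 < 1 - s := by linarith
  have hexp' : Real.exp (-a') = 1 - s := by
    rw [ha', neg_neg, Real.exp_log h1s]
  have ha'0 : 0 < a' := by
    rw [ha', neg_pos]
    exact Real.log_neg h1s (by linarith)
  -- the log arguments agree
  have hvs : v * s = u * (1 - Real.exp (-a)) := by
    rw [hs]; field_simp
  have harg : 1 + v * (1 - Real.exp (-a')) = 1 + u * (1 - Real.exp (-a)) := by
    rw [hexp']; linear_combination hvs
  -- exp a' ≤ exp a
  have hle : Real.exp a' ≤ Real.exp a := by
    apply Real.exp_le_exp.mpr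
    have : Real.exp (-a) ≤ Real.exp (-a') := by
      rw [hexp']; linarith
    have := Real.exp_le_exp.mp this
    linarith
  set x : ℝ := 1 + u * (1 - Real.exp (-a)) with hx
  have hx1 : (1:ℝ) ≤ x := by nlinarith
  have hx0 : (0:ℝ) < x := by linarith
  have hlog : 0 ≤ Real.log x := Real.log_nonneg hx1
  have key : Real.log x / (Real.exp a * x) ≤ Real.log x / (Real.exp a' * x) := by
    apply div_le_div_of_nonneg_left hlog (by positivity)
    exact mul_le_mul_of_nonneg_right hle (le_of_lt hx0)
  calc Real.log (1 + u * (1 - Real.exp (-a))) /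
        (Real.exp a * (1 + u * (1 - Real.exp (-a))))
      ≤ Real.log (1 + v * (1 - Real.exp (-a'))) /
        (Real.exp a' * (1 + v * (1 - Real.exp (-a')))) := by rw [harg]; exact key
    _ ≤ Fsup v := le_csSup hbdd ⟨a', ha'0, rfl⟩
end

section
/- Let F(u) := sup_{a>0} log(1 + u(1 − e^{−a})) / ( e^{a} (1 + u(1 − e^{−a})) ) for u > 0. Then F(u) < e^{−1} for every u > 0, and F(u) → e^{−1} as u → ∞. -/
/-!
Write `x = 1 + u (1 - e^{-a})`, so the quantity under the supremum is `(log x / x) e^{-a}`.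
Since `log x / x ≤ e⁻¹`, with equality only at `x = e`, it is at most `e^{-1-a}`; for small
`a` it is also at most `log x ≤ x - 1 ≤ u a`. Balancing the two bounds keeps the supremum
strictly below `e⁻¹`. Conversely, once `u > e - 1` the choice of `a` with `x = e` attains
`e⁻¹ (1 - (e - 1) / u)`, which tends to `e⁻¹`.
-/

open Real Filter Set

noncomputable def fsupArg (u a : ℝ) : ℝ :=
  log (1 + u * (1 - exp (-a))) / (exp a * (1 + u * (1 - exp (-a))))

lemma log_div_self_le_exp_neg_one {x : ℝ} (hx : 0 < x) : log x / x ≤ exp (-1) := by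
  simpa [exp_neg, exp_log hx, div_eq_mul_inv] using mul_exp_neg_le_exp_neg_one (log x)

section

variable {u a : ℝ}

lemma one_le_one_add_mul_one_sub_exp_neg (hu : 0 ≤ u) (ha : 0 ≤ a) :
    1 ≤ 1 + u * (1 - exp (-a)) := by
  have : exp (-a) ≤ 1 := exp_le_one_iff.mpr (by linarith)
  nlinarith

lemma fsupArg_le_exp_neg (hu : 0 ≤ u) (ha : 0 ≤ a) :
    fsupArg u a ≤ exp (-1) * exp (-a) := by
  have hx := one_le_one_add_mul_one_sub_exp_neg hu ha
  set x := 1 + u * (1 - exp (-a))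
  calc fsupArg u a = log x / x * exp (-a) := by
        change log x / (exp a * x) = _
        rw [exp_neg, mul_comm (exp a), ← div_div, div_eq_mul_inv]
    _ ≤ exp (-1) * exp (-a) := by
        gcongr; exact log_div_self_le_exp_neg_one (by linarith)

lemma fsupArg_le_mul (hu : 0 ≤ u) (ha : 0 ≤ a) : fsupArg u a ≤ u * a := by
  have hx := one_le_one_add_mul_one_sub_exp_neg hu ha
  set x := 1 + u * (1 - exp (-a))
  have hden : 1 ≤ exp a * x := one_le_mul_of_one_le_of_one_le (one_le_exp ha) hx
  calc fsupArg u a ≤ log x := div_le_self (log_nonneg hx) hden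
    _ ≤ x - 1 := log_le_sub_one_of_pos (by linarith)
    _ ≤ u * a := by
        have := add_one_le_exp (-a)
        simp only [x]; nlinarith

lemma Fsup_eq_sSup (u : ℝ) : Fsup u = sSup (fsupArg u '' Ioi 0) := rfl

lemma bddAbove_fsupArg_image (hu : 0 ≤ u) : BddAbove (fsupArg u '' Ioi 0) := by
  refine ⟨exp (-1), ?_⟩
  rintro _ ⟨a, ha, rfl⟩
  have : exp (-a) ≤ 1 := exp_le_one_iff.mpr (neg_nonpos.mpr (le_of_lt ha))
  calc fsupArg u a ≤ exp (-1) * exp (-a) := fsupArg_le_exp_neg hu (le_of_lt ha)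
    _ ≤ exp (-1) := mul_le_of_le_one_right (exp_pos _).le this

lemma Fsup_le_max (hu : 0 ≤ u) (c : ℝ) :
    Fsup u ≤ max (u * c) (exp (-1) * exp (-c)) := by
  rw [Fsup_eq_sSup]
  refine csSup_le ((nonempty_Ioi (a := (0 : ℝ))).image _) ?_
  rintro _ ⟨a, ha, rfl⟩
  have ha : 0 ≤ a := le_of_lt ha
  rcases le_total a c with hac | hca
  · exact le_max_of_le_left ((fsupArg_le_mul hu ha).trans (by gcongr))
  · exact le_max_of_le_right ((fsupArg_le_exp_neg hu ha).trans (by gcongr))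

lemma Fsup_lt_exp_neg_one (hu : 0 < u) : Fsup u < exp (-1) := by
  set c := exp (-1) / (2 * u)
  have hc : 0 < c := by positivity
  refine (Fsup_le_max hu.le c).trans_lt (max_lt ?_ ?_)
  · have : u * c = exp (-1) / 2 := by simp only [c]; field_simp
    rw [this]; linarith [exp_pos (-1)]
  · exact mul_lt_of_lt_one_right (exp_pos _) (exp_lt_one_iff.mpr (by linarith))

lemma exp_neg_one_mul_le_Fsup (hu : exp 1 - 1 < u) :
    exp (-1) * (1 - (exp 1 - 1) / u) ≤ Fsup u := by
  have hu0 : 0 < u := lt_trans (by linarith [add_one_le_exp 1]) hu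
  set z := 1 - (exp 1 - 1) / u
  have hz0 : 0 < z := by
    have : (exp 1 - 1) / u < 1 := (div_lt_one hu0).mpr hu
    linarith
  have hz1 : z < 1 := by
    have : 0 < (exp 1 - 1) / u := div_pos (by linarith [add_one_le_exp 1]) hu0
    linarith
  -- the point `a₀ = -log z` is where `1 + u (1 - e^{-a₀}) = e`
  have ha₀ : 0 < -log z := neg_pos.mpr (log_neg hz0 hz1)
  have hx : 1 + u * (1 - exp (-(-log z))) = exp 1 := by
    rw [neg_neg, exp_log hz0]; simp only [z]; field_simp; ring
  have hval : fsupArg u (-log z) = exp (-1) * z := by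
    rw [fsupArg, hx, log_exp, exp_neg, exp_neg, exp_log hz0]
    field_simp
  rw [Fsup_eq_sSup, ← hval]
  exact le_csSup (bddAbove_fsupArg_image hu0.le) ⟨_, ha₀, rfl⟩

lemma tendsto_Fsup_atTop : Tendsto Fsup atTop (nhds (exp (-1))) := by
  have hlower : Tendsto (fun u => exp (-1) * (1 - (exp 1 - 1) / u)) atTop (nhds (exp (-1))) := by
    have h : Tendsto (fun u : ℝ => (exp 1 - 1) / u) atTop (nhds 0) :=
      tendsto_const_nhds.div_atTop tendsto_id
    simpa using (h.const_sub 1).const_mul (exp (-1))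
  refine tendsto_of_tendsto_of_tendsto_of_le_of_le' hlower tendsto_const_nhds ?_ ?_
  · filter_upwards [eventually_gt_atTop (exp 1 - 1)] with u hu
    exact exp_neg_one_mul_le_Fsup hu
  · filter_upwards [eventually_gt_atTop 0] with u hu
    exact (Fsup_lt_exp_neg_one hu).le

end

/-- F(u) < e⁻¹ for every u > 0, and F(u) → e⁻¹ as u → ∞. -/
theorem stmt_5 :
    (∀ u : ℝ, 0 < u → Fsup u < Real.exp (-1)) ∧
      Filter.Tendsto Fsup Filter.atTop (nhds (Real.exp (-1))) :=
  ⟨fun _ hu => Fsup_lt_exp_neg_one hu, tendsto_Fsup_atTop⟩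
end

section
/- Let F(u) := sup_{a>0} log(1 + u(1 − e^{−a})) / ( e^{a} (1 + u(1 − e^{−a})) ) for u > 0. Then for every K ≥ 1 and every u > 0 one has K · F(uK) ≥ F(u). In particular, for any β > 0, B ≥ 0 and C(β) > 0, the radius ρ* := e^{−βB} K F(e^{−βB}K)/C(β) satisfies ρ* ≥ ρ*₁ := e^{−βB} F(e^{−βB})/C(β) for all K ≥ 1. -/
lemma fsup_bddAbove (u : ℝ) (hu : 0 ≤ u) :
    BddAbove ((fun a : ℝ => Real.log (1 + u * (1 - Real.exp (-a))) /
      (Real.exp a * (1 + u * (1 - Real.exp (-a))))) '' Set.Ioi 0) := by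
  refine ⟨1, ?_⟩
  rintro y ⟨a, ha, rfl⟩
  have ha : (0:ℝ) < a := ha
  dsimp only
  set x := u * (1 - Real.exp (-a)) with hx
  have hx0 : 0 ≤ x := by
    have h1 : Real.exp (-a) ≤ 1 := by
      rw [← Real.exp_zero]; exact Real.exp_le_exp.mpr (by linarith)
    exact mul_nonneg hu (by linarith)
  have hea : 1 ≤ Real.exp a := Real.one_le_exp ha.le
  have hden : (1:ℝ) ≤ Real.exp a * (1 + x) := by nlinarith
  have hlog := Real.log_le_sub_one_of_pos (by linarith : (0:ℝ) < 1 + x)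
  rw [div_le_one (by linarith)]
  nlinarith

/-- K · F(uK) ≥ F(u) for K ≥ 1, u > 0; consequently ρ* ≥ ρ*₁. -/
theorem stmt_8 :
    (∀ K : ℝ, 1 ≤ K → ∀ u : ℝ, 0 < u → Fsup u ≤ K * Fsup (u * K)) ∧
      (∀ β B C : ℝ, 0 < β → 0 ≤ B → 0 < C → ∀ K : ℝ, 1 ≤ K →
        Real.exp (-β * B) * Fsup (Real.exp (-β * B)) / C ≤
          Real.exp (-β * B) * K * Fsup (Real.exp (-β * B) * K) / C) := by
  have main : ∀ K : ℝ, 1 ≤ K → ∀ u : ℝ, 0 < u → Fsup u ≤ K * Fsup (u * K) := by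
    intro K hK u hu
    have hK0 : (0:ℝ) < K := lt_of_lt_of_le one_pos hK
    have huK : 0 ≤ u * K := mul_nonneg hu.le hK0.le
    have hne : ((fun a : ℝ => Real.log (1 + u * (1 - Real.exp (-a))) /
        (Real.exp a * (1 + u * (1 - Real.exp (-a))))) '' Set.Ioi 0).Nonempty :=
      ⟨_, ⟨1, Set.mem_Ioi.mpr one_pos, rfl⟩⟩
    refine csSup_le hne ?_
    rintro y ⟨a, ha, rfl⟩
    have ha : (0:ℝ) < a := ha
    dsimp only
    set x := u * (1 - Real.exp (-a)) with hx
    have hx0 : 0 ≤ x := by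
      have h1 : Real.exp (-a) ≤ 1 := by
        rw [← Real.exp_zero]; exact Real.exp_le_exp.mpr (by linarith)
      exact mul_nonneg hu.le (by linarith)
    have hea : (0:ℝ) < Real.exp a := Real.exp_pos a
    have hxK : u * K * (1 - Real.exp (-a)) = K * x := by ring
    have hL1 : 0 ≤ Real.log (1 + x) := Real.log_nonneg (by linarith)
    have hL12 : Real.log (1 + x) ≤ Real.log (1 + K * x) := by
      apply Real.log_le_log (by linarith)
      nlinarith
    have hpt : Real.log (1 + x) / (Real.exp a * (1 + x)) ≤
        K * (Real.log (1 + K * x) / (Real.exp a * (1 + K * x))) := by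
      have hKx0 : 0 ≤ K * x := mul_nonneg hK0.le hx0
      rw [mul_div_assoc']
      rw [div_le_div_iff₀ (by positivity) (by positivity)]
      have h1 := mul_le_mul_of_nonneg_right hL12
        (mul_nonneg hea.le (by linarith : (0:ℝ) ≤ 1 + x))
      have h2 := mul_le_mul_of_nonneg_left h1 hK0.le
      have h3 := mul_nonneg (mul_nonneg hL1 hea.le) (sub_nonneg.mpr hK)
      nlinarith [h1, h2, h3]
    refine hpt.trans ?_
    apply mul_le_mul_of_nonneg_left ?_ hK0.le
    have hmem : Real.log (1 + K * x) / (Real.exp a * (1 + K * x)) ∈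
        ((fun a : ℝ => Real.log (1 + u * K * (1 - Real.exp (-a))) /
          (Real.exp a * (1 + u * K * (1 - Real.exp (-a))))) '' Set.Ioi 0) := by
      refine ⟨a, ha, ?_⟩
      simp only [hxK]
    exact le_csSup (fsup_bddAbove (u * K) huK) hmem
  refine ⟨main, ?_⟩
  intro β B C hβ hB hC K hK
  have he : (0:ℝ) < Real.exp (-β * B) := Real.exp_pos _
  have h := main K hK (Real.exp (-β * B)) he
  have : Real.exp (-β * B) * Fsup (Real.exp (-β * B)) ≤
      Real.exp (-β * B) * K * Fsup (Real.exp (-β * B) * K) := by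
    calc Real.exp (-β * B) * Fsup (Real.exp (-β * B))
        ≤ Real.exp (-β * B) * (K * Fsup (Real.exp (-β * B) * K)) :=
          mul_le_mul_of_nonneg_left h he.le
      _ = Real.exp (-β * B) * K * Fsup (Real.exp (-β * B) * K) := by ring
  exact div_le_div_of_nonneg_right this hC.le
end

section
/- For every t ∈ [0,1], the series identity Σ_{n≥1} (n^{n−1}/n!) (t e^{−t})^{n−1} = e^{t} holds. -/
/-!
Let `G x = ∑ aₙ xⁿ` (`treeSeries`) with `aₙ = (n + 1)ⁿ / (n + 1)!`, so that `G x = T(x) / x`.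
For small `t ≥ 0`, `G (t e⁻ᵗ) e⁻ᵗ = ∑ₖ aₖ tᵏ e^{-(k+1)t}` expands into an absolutely convergent
double series. Collected by total degree `m`, the coefficient of `tᵐ` is
`(1 / m!) ∑ₖ (-1)^{m-k} (m choose k) (k + 1)^{m-1}`, an `m`-th forward difference of a polynomial
of degree `m - 1`, hence zero for `m ≥ 1`; so `G (t e⁻ᵗ) = eᵗ` near `0`. Stirling's bound gives
`aₙ e⁻ⁿ ≤ e / (n + 1)^{3/2}`, so `G` is analytic on `|x| < e⁻¹` and continuous on `[0, e⁻¹]`.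
As `t e⁻ᵗ < e⁻¹` for `t ≠ 1`, the identity propagates to `(0, 1)` by analytic continuation and
to `[0, 1]` by continuity.
-/

open Finset Real Set Filter Topology
open scoped Nat

theorem sum_range_neg_one_pow_mul_choose_mul_pow_eq_zero {R : Type*} [CommRing R] (c : R)
    {j m : ℕ} (h : j < m) :
    ∑ k ∈ range (m + 1), (-1) ^ (m - k) * (m.choose k : R) * (c + k) ^ j = 0 := by
  have h_diff := fwdDiff_iter_eq_sum_shift (h := (1 : R)) (fun r : R => r ^ j) m c
  rw [fwdDiff_iter_pow_eq_zero_of_lt h, Pi.zero_apply] at h_diff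
  simpa [zsmul_eq_mul, nsmul_eq_mul] using h_diff.symm

theorem sum_antidiagonal_neg_one_pow_mul_pow_div_factorial_eq_zero {K : Type*} [Field K]
    [CharZero K] (c : K) {j m : ℕ} (h : j < m) :
    ∑ p ∈ antidiagonal m, (-1) ^ p.2 * (c + p.1) ^ j / (p.1 ! * p.2 ! : K) = 0 := by
  have hm : (m ! : K) ≠ 0 := Nat.cast_ne_zero.mpr m.factorial_ne_zero
  rw [← mul_right_inj' hm, mul_zero, ← sum_range_neg_one_pow_mul_choose_mul_pow_eq_zero c h,
    Nat.sum_antidiagonal_eq_sum_range_succ_mk, mul_sum]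
  refine sum_congr rfl fun k hk => ?_
  rw [Nat.cast_choose K (Nat.lt_succ_iff.mp (mem_range.mp hk))]
  field_simp

theorem Summable.tsum_eq_tsum_sum_antidiagonal {α : Type*} [AddCommMonoid α] [TopologicalSpace α]
    [ContinuousAdd α] [T3Space α] {f : ℕ × ℕ → α} (hf : Summable f) :
    ∑' p, f p = ∑' n, ∑ p ∈ antidiagonal n, f p := by
  conv_rhs => congr; ext; rw [← Finset.sum_finset_coe, ← tsum_fintype (L := .unconditional _)]
  rw [← HasAntidiagonal.sigmaAntidiagonalEquivProd.tsum_eq f]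
  exact (HasAntidiagonal.sigmaAntidiagonalEquivProd.summable_iff.mpr hf).tsum_sigma'
    fun n ↦ (hasSum_fintype _).summable

theorem Real.mul_exp_neg_lt_exp_neg_one {y : ℝ} (hy : y ≠ 1) : y * exp (-y) < exp (-1) := by
  have h_lt : y < exp (y - 1) := by simpa using add_one_lt_exp (sub_ne_zero.mpr hy)
  have h_mul_lt : y * exp (-y) < exp (y - 1) * exp (-y) := by gcongr
  simpa [← exp_add, sub_add_eq_add_sub] using h_mul_lt

noncomputable def treeCoeff (n : ℕ) : ℝ := (n + 1 : ℝ) ^ n / (Nat.factorial (n + 1) : ℝ)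

noncomputable def treeSeries (x : ℝ) : ℝ := ∑' n, treeCoeff n * x ^ n

lemma treeCoeff_nonneg (n : ℕ) : 0 ≤ treeCoeff n := by unfold treeCoeff; positivity

lemma treeCoeff_mul_pow_le {x : ℝ} (hx₀ : 0 ≤ x) (hx : x ≤ exp (-1)) (n : ℕ) :
    treeCoeff n * x ^ n ≤ exp 1 / ((n : ℝ) + 1) ^ (3 / 2 : ℝ) := by
  refine (mul_le_mul_of_nonneg_left (pow_le_pow_left₀ hx₀ hx n) (treeCoeff_nonneg n)).trans ?_
  set N : ℝ := n + 1
  have hN : 0 < N := by positivity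
  have h_stirling : √(2 * π * N) * (N / exp 1) ^ (n + 1) ≤ ((n + 1)! : ℝ) := by
    simpa [N] using Stirling.le_factorial_stirling (n + 1)
  have h_sqrt : √N ≤ √(2 * π * N) := sqrt_le_sqrt (by nlinarith [pi_gt_three])
  have h_rpow : N ^ (3 / 2 : ℝ) = N * √N := by
    rw [show (3 / 2 : ℝ) = 1 + 1 / 2 by norm_num, rpow_add hN, rpow_one, sqrt_eq_rpow]
  rw [treeCoeff, exp_neg, h_rpow, div_mul_eq_mul_div,
    div_le_div_iff₀ (by positivity) (by positivity)]
  calc N ^ n * (exp 1)⁻¹ ^ n * (N * √N) = exp 1 * (√N * (N / exp 1) ^ (n + 1)) := by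
        rw [inv_pow, div_pow, pow_succ _ n]; field_simp; ring
    _ ≤ exp 1 * ((n + 1)! : ℝ) := by gcongr; exact (by gcongr : _ ≤ _).trans h_stirling

lemma summable_exp_one_div_rpow_three_halves :
    Summable fun n : ℕ => exp 1 / ((n : ℝ) + 1) ^ (3 / 2 : ℝ) := by
  have h := (summable_nat_add_iff 1).mpr
    (summable_one_div_nat_rpow.mpr (by norm_num : (1 : ℝ) < 3 / 2))
  simpa [div_eq_mul_inv] using h.mul_left (exp 1)

lemma summable_treeCoeff_mul_pow {x : ℝ} (hx₀ : 0 ≤ x) (hx : x ≤ exp (-1)) :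
    Summable fun n => treeCoeff n * x ^ n :=
  summable_exp_one_div_rpow_three_halves.of_nonneg_of_le
    (fun n => mul_nonneg (treeCoeff_nonneg n) (pow_nonneg hx₀ n)) (treeCoeff_mul_pow_le hx₀ hx)

lemma continuousOn_treeSeries : ContinuousOn treeSeries (Icc 0 (exp (-1))) := by
  refine continuousOn_tsum (fun n => by fun_prop) summable_exp_one_div_rpow_three_halves
    fun n x hx => ?_
  rw [Real.norm_eq_abs, abs_of_nonneg (mul_nonneg (treeCoeff_nonneg n) (pow_nonneg hx.1 n))]
  exact treeCoeff_mul_pow_le hx.1 hx.2 n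

lemma analyticAt_treeSeries {x : ℝ} (hx : |x| < exp (-1)) : AnalyticAt ℝ treeSeries x := by
  set p := FormalMultilinearSeries.ofScalars ℝ treeCoeff
  set r : NNReal := ⟨exp (-1), (exp_pos _).le⟩
  have hr : (r : ENNReal) ≤ p.radius := by
    refine p.le_radius_of_summable ((summable_treeCoeff_mul_pow r.2 le_rfl).congr fun n => ?_)
    rw [FormalMultilinearSeries.ofScalars_norm, Real.norm_eq_abs,
      abs_of_nonneg (treeCoeff_nonneg n)]
    rfl
  have hx_mem : x ∈ Metric.eball (0 : ℝ) p.radius := by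
    refine lt_of_lt_of_le ?_ hr
    rw [edist_zero_right, ← ofReal_norm, Real.norm_eq_abs]
    exact ENNReal.ofReal_lt_iff_lt_toReal (abs_nonneg x) ENNReal.coe_ne_top |>.mpr hx
  have h_sum : p.sum = treeSeries := funext fun y => by
    simpa [treeSeries, FormalMultilinearSeries.ofScalarsSum, smul_eq_mul] using
      FormalMultilinearSeries.ofScalars_sum_eq (E := ℝ) treeCoeff y
  rw [← h_sum]
  exact (p.hasFPowerSeriesOnBall (zero_le.trans_lt hx_mem)).analyticAt_of_mem hx_mem

lemma hasSum_mul_pow_div_factorial (c x : ℝ) :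
    HasSum (fun n => c * x ^ n / (n ! : ℝ)) (c * exp x) := by
  simpa only [mul_div_assoc, ← exp_eq_exp_ℝ] using
    (NormedSpace.expSeries_div_hasSum_exp x).mul_left c

noncomputable def treeDoubleTerm (t : ℝ) (p : ℕ × ℕ) : ℝ :=
  treeCoeff p.1 * t ^ p.1 * (-((p.1 + 1 : ℝ) * t)) ^ p.2 / (p.2 ! : ℝ)

lemma hasSum_treeDoubleTerm_row (t : ℝ) (k : ℕ) :
    HasSum (fun l => treeDoubleTerm t (k, l)) (treeCoeff k * t ^ k * exp (-((k + 1) * t))) :=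
  hasSum_mul_pow_div_factorial _ _

lemma summable_treeDoubleTerm {t : ℝ} (ht₀ : 0 ≤ t) (ht : t * exp t ≤ exp (-1)) :
    Summable (treeDoubleTerm t) := by
  set g : ℕ × ℕ → ℝ :=
    fun p => treeCoeff p.1 * t ^ p.1 * ((p.1 + 1 : ℝ) * t) ^ p.2 / (p.2 ! : ℝ)
  have hg_row (k : ℕ) : HasSum (fun l => g (k, l)) (exp t * (treeCoeff k * (t * exp t) ^ k)) := by
    convert hasSum_mul_pow_div_factorial (treeCoeff k * t ^ k) ((k + 1) * t) using 1
    rw [mul_pow, ← exp_nat_mul, add_mul, one_mul, exp_add]; ring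
  have hg : Summable g := by
    refine (summable_prod_of_nonneg fun p => ?_).mpr ⟨fun k => (hg_row k).summable, ?_⟩
    · have := treeCoeff_nonneg p.1
      simp only [g, Pi.zero_apply]
      positivity
    simp_rw [fun k => (hg_row k).tsum_eq]
    exact (summable_treeCoeff_mul_pow (by positivity) ht).mul_left _
  refine hg.of_norm_bounded fun p => le_of_eq ?_
  simp [treeDoubleTerm, g, abs_of_nonneg ht₀, abs_of_nonneg (treeCoeff_nonneg _),
    abs_of_nonneg (Nat.cast_add_one_pos (α := ℝ) p.1).le]

lemma treeDoubleTerm_eq (t : ℝ) (p : ℕ × ℕ) :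
    treeDoubleTerm t p =
      t ^ (p.1 + p.2) * ((-1) ^ p.2 * (1 + p.1 : ℝ) ^ (p.1 + p.2 - 1) / (p.1 ! * p.2 ! : ℝ)) := by
  obtain ⟨k, l⟩ := p
  rcases Nat.eq_zero_or_pos (k + l) with h | h
  · obtain ⟨rfl, rfl⟩ : k = 0 ∧ l = 0 := by omega
    simp [treeDoubleTerm, treeCoeff]
  have h_pow : (1 + k : ℝ) ^ (k + l) = (1 + k) ^ (k + l - 1) * (1 + k) := by
    rw [← pow_succ, Nat.sub_add_cancel h]
  simp only [treeDoubleTerm, treeCoeff, Nat.factorial_succ]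
  push_cast
  rw [neg_pow, mul_pow]
  field_simp
  linear_combination t ^ (k + l) * h_pow

lemma sum_antidiagonal_treeDoubleTerm (t : ℝ) (m : ℕ) :
    ∑ p ∈ antidiagonal m, treeDoubleTerm t p = if m = 0 then 1 else 0 := by
  rcases Nat.eq_zero_or_pos m with rfl | hm
  · simp [treeDoubleTerm, treeCoeff]
  calc ∑ p ∈ antidiagonal m, treeDoubleTerm t p
      = t ^ m * ∑ p ∈ antidiagonal m,
          (-1) ^ p.2 * (1 + p.1 : ℝ) ^ (m - 1) / (p.1 ! * p.2 ! : ℝ) := by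
        rw [mul_sum]
        refine sum_congr rfl fun p hp => ?_
        rw [treeDoubleTerm_eq, mem_antidiagonal.mp hp]
    _ = if m = 0 then 1 else 0 := by
        rw [sum_antidiagonal_neg_one_pow_mul_pow_div_factorial_eq_zero 1 (Nat.sub_lt hm one_pos),
          mul_zero, if_neg hm.ne']

lemma tsum_treeCoeff_mul_pow_mul_exp {t : ℝ} (ht₀ : 0 ≤ t) (ht : t * exp t ≤ exp (-1)) :
    ∑' k, treeCoeff k * t ^ k * exp (-((k + 1) * t)) = 1 := by
  have hs := summable_treeDoubleTerm ht₀ ht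
  calc ∑' k, treeCoeff k * t ^ k * exp (-((k + 1) * t))
      = ∑' p, treeDoubleTerm t p := by
        rw [hs.tsum_prod' fun k => (hasSum_treeDoubleTerm_row t k).summable]
        exact tsum_congr fun k => (hasSum_treeDoubleTerm_row t k).tsum_eq.symm
    _ = ∑' m, ∑ p ∈ antidiagonal m, treeDoubleTerm t p := hs.tsum_eq_tsum_sum_antidiagonal
    _ = 1 := by simp_rw [sum_antidiagonal_treeDoubleTerm, tsum_ite_eq]

lemma treeSeries_mul_exp_neg_of_mul_exp_le {t : ℝ} (ht₀ : 0 ≤ t) (ht : t * exp t ≤ exp (-1)) :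
    treeSeries (t * exp (-t)) = exp t := by
  calc treeSeries (t * exp (-t))
      = ∑' k, exp t * (treeCoeff k * t ^ k * exp (-((k + 1) * t))) := by
        refine tsum_congr fun k => ?_
        rw [mul_pow, ← exp_nat_mul, mul_neg, add_mul, one_mul, neg_add, exp_add, exp_neg t]
        field_simp
    _ = exp t := by rw [tsum_mul_left, tsum_treeCoeff_mul_pow_mul_exp ht₀ ht, mul_one]

lemma mul_exp_le_exp_neg_one_of_le {t : ℝ} (ht₀ : 0 ≤ t) (ht : t ≤ 1 / 10) :
    t * exp t ≤ exp (-1) := by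
  have h_exp : exp t ≤ exp 1 := exp_le_exp.mpr (by linarith)
  nlinarith [exp_one_lt_d9, exp_neg_one_gt_d9, exp_pos t]

lemma treeSeries_mul_exp_neg_eqOn_Ioo :
    EqOn (fun t => treeSeries (t * exp (-t))) exp (Ioo 0 1) := by
  have h_analytic : AnalyticOnNhd ℝ (fun t => treeSeries (t * exp (-t))) (Ioo 0 1) := by
    intro t ht
    refine (analyticAt_treeSeries ?_).comp (by fun_prop)
    rw [abs_of_pos (by have := ht.1; positivity)]
    exact mul_exp_neg_lt_exp_neg_one ht.2.ne
  have h_near : (fun t => treeSeries (t * exp (-t))) =ᶠ[𝓝 (1 / 20)] exp :=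
    eventuallyEq_of_mem (Ioo_mem_nhds (by norm_num : (0 : ℝ) < 1 / 20)
      (by norm_num : (1 / 20 : ℝ) < 1 / 10)) fun t ht =>
        treeSeries_mul_exp_neg_of_mul_exp_le ht.1.le (mul_exp_le_exp_neg_one_of_le ht.1.le ht.2.le)
  exact h_analytic.eqOn_of_preconnected_of_eventuallyEq (fun t _ => analyticAt_rexp)
    isPreconnected_Ioo (by norm_num) h_near

lemma treeSeries_mul_exp_neg_eqOn_Icc :
    EqOn (fun t => treeSeries (t * exp (-t))) exp (Icc 0 1) := by
  have h_maps : MapsTo (fun t => t * exp (-t)) (Icc 0 1) (Icc 0 (exp (-1))) :=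
    fun t ht => ⟨by have := ht.1; positivity, mul_exp_neg_le_exp_neg_one t⟩
  refine treeSeries_mul_exp_neg_eqOn_Ioo.of_subset_closure
    (continuousOn_treeSeries.comp (by fun_prop) h_maps) continuous_exp.continuousOn
    Ioo_subset_Icc_self ?_
  rw [closure_Ioo zero_ne_one]

/-- Σ_{n≥1} (n^{n-1}/n!) (t e^{-t})^{n-1} = e^t for t ∈ [0,1]. -/
theorem stmt_10 (t : ℝ) (ht : t ∈ Set.Icc (0 : ℝ) 1) :
    ∑' n : ℕ, ((n + 1 : ℝ) ^ n / (Nat.factorial (n + 1) : ℝ)) * (t * Real.exp (-t)) ^ n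
      = Real.exp t :=
  treeSeries_mul_exp_neg_eqOn_Icc ht
end

section
/- Let F(u) := sup_{a>0} log(1 + u(1 − e^{−a})) / ( e^{a} (1 + u(1 − e^{−a})) ). Then 0.1447 ≤ F(1) ≤ 0.1449. -/
private lemma log_series_bounds (y : ℝ) (h0 : 0 ≤ y) (h1 : y < 1) :
    Real.log (1 + y) ≤ (y - y^2/2 + y^3/3 - y^4/4 + y^5/5 - y^6/6 + y^7/7 - y^8/8 + y^9/9)
      + y^10/(1-y) ∧
    (y - y^2/2 + y^3/3 - y^4/4 + y^5/5 - y^6/6 + y^7/7 - y^8/8 + y^9/9) - y^10/(1-y)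
      ≤ Real.log (1 + y) := by
  have hx : |(-y)| < 1 := by rw [abs_neg, abs_of_nonneg h0]; exact h1
  have h := Real.abs_log_sub_add_sum_range_le hx 9
  rw [abs_le] at h
  simp only [Finset.sum_range_succ, Finset.sum_range_zero, abs_neg, abs_of_nonneg h0,
    sub_neg_eq_add] at h
  obtain ⟨hl, hr⟩ := h
  constructor <;> nlinarith [hl, hr]

private lemma poly_bound (y : ℝ) (h0 : 0 ≤ y) (h1 : y ≤ 0.65) :
    (1-y) * (y - y^2/2 + y^3/3 - y^4/4 + y^5/5 - y^6/6 + y^7/7 - y^8/8 + y^9/9) + y^10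
      ≤ 0.1449 * (1+y) := by
  nlinarith [sq_nonneg (y - 0.37), sq_nonneg (y*(y-0.37)), sq_nonneg (y^2*(y-0.37)),
    sq_nonneg (y^3*(y-0.37)), sq_nonneg (y^4*(y-0.37)), sq_nonneg (y^2-0.37*y),
    mul_nonneg h0 (sub_nonneg.2 h1), mul_nonneg (mul_nonneg h0 h0) (sub_nonneg.2 h1),
    sq_nonneg (y^2 - 0.75*y + 0.1), mul_nonneg (mul_nonneg h0 h0) h0,
    sq_nonneg (y^3 - 0.37*y), sq_nonneg (y^4 - 0.37*y^2)]

private lemma key_upper (a : ℝ) (ha : a ∈ Set.Ioi (0:ℝ)) :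
    Real.log (1 + 1 * (1 - Real.exp (-a))) /
      (Real.exp a * (1 + 1 * (1 - Real.exp (-a)))) ≤ (0.1449 : ℝ) := by
  have ha0 : (0:ℝ) < a := ha
  set x : ℝ := Real.exp (-a) with hxdef
  have hx0 : 0 < x := Real.exp_pos _
  have hx1 : x < 1 := by
    rw [hxdef]
    exact Real.exp_lt_one_iff.mpr (by linarith)
  set y : ℝ := 1 - x with hydef
  have hy0 : 0 ≤ y := by simp [hydef]; linarith
  have hy1 : y < 1 := by simp [hydef]; linarith
  have hxy : x = 1 - y := by simp [hydef]
  have hexp : Real.exp a = 1/x := by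
    rw [hxdef, one_div, ← Real.exp_neg, neg_neg]
  have h1y : (0:ℝ) < 1 + y := by linarith
  have heq : Real.log (1 + 1 * (1 - Real.exp (-a))) /
      (Real.exp a * (1 + 1 * (1 - Real.exp (-a))))
      = (1 - y) * Real.log (1 + y) / (1 + y) := by
    rw [hexp]
    rw [show (1 + 1 * (1 - Real.exp (-a))) = 1 + y by rw [← hxdef, ← hydef]; ring]
    rw [hxy]
    field_simp
  rw [heq, div_le_iff₀ h1y]
  have hlog_nonneg : 0 ≤ Real.log (1 + y) := Real.log_nonneg (by linarith)
  rcases le_or_gt y 0.65 with hc | hc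
  · -- series bound
    have hs := (log_series_bounds y hy0 hy1).1
    have h1my : (0:ℝ) < 1 - y := by linarith
    have : (1 - y) * Real.log (1 + y) ≤
        (1-y) * (y - y^2/2 + y^3/3 - y^4/4 + y^5/5 - y^6/6 + y^7/7 - y^8/8 + y^9/9) + y^10 := by
      have := mul_le_mul_of_nonneg_left hs (le_of_lt h1my)
      have hfield : (1-y) * ((y - y^2/2 + y^3/3 - y^4/4 + y^5/5 - y^6/6 + y^7/7 - y^8/8 + y^9/9)
          + y^10/(1-y)) = (1-y) * (y - y^2/2 + y^3/3 - y^4/4 + y^5/5 - y^6/6 + y^7/7 - y^8/8 + y^9/9) + y^10 := by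
        field_simp
      linarith [hfield ▸ this]
    linarith [poly_bound y hy0 hc]
  · -- y ≥ 0.65 : use log(1+y) ≤ y
    have hs : Real.log (1 + y) ≤ y := by
      have := Real.log_le_sub_one_of_pos h1y
      linarith
    have h1my : (0:ℝ) ≤ 1 - y := by linarith
    have : (1 - y) * Real.log (1 + y) ≤ (1 - y) * y :=
      mul_le_mul_of_nonneg_left hs h1my
    nlinarith

/-- numerical bounds 0.1447 ≤ F(1) ≤ 0.1449. -/
theorem stmt_13 : (0.1447 : ℝ) ≤ Fsup 1 ∧ Fsup 1 ≤ (0.1449 : ℝ) := by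
  have hbdd : BddAbove ((fun a : ℝ => Real.log (1 + 1 * (1 - Real.exp (-a))) /
      (Real.exp a * (1 + 1 * (1 - Real.exp (-a))))) '' Set.Ioi 0) := by
    refine ⟨0.1449, ?_⟩
    rintro b ⟨a, ha, rfl⟩
    exact key_upper a ha
  constructor
  · -- lower bound via a₀ = log (8/5)
    have hmem : Real.log (11/8) / (11/5) ∈ ((fun a : ℝ => Real.log (1 + 1 * (1 - Real.exp (-a))) /
        (Real.exp a * (1 + 1 * (1 - Real.exp (-a))))) '' Set.Ioi 0) := by
      refine ⟨Real.log (8/5), Real.log_pos (by norm_num), ?_⟩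
      have h1 : Real.exp (Real.log (8/5)) = 8/5 := Real.exp_log (by norm_num)
      have h2 : Real.exp (-Real.log (8/5)) = 5/8 := by
        rw [Real.exp_neg, h1]; norm_num
      dsimp only
      rw [h1, h2]
      norm_num
    have hle : Real.log (11/8) / (11/5) ≤ Fsup 1 := le_csSup hbdd hmem
    have hlog : (0.31834 : ℝ) ≤ Real.log (11/8) := by
      have h := (log_series_bounds (3/8) (by norm_num) (by norm_num)).2
      norm_num at h ⊢
      linarith
    have : (0.1447 : ℝ) ≤ Real.log (11/8) / (11/5) := by
      rw [le_div_iff₀ (by norm_num : (0:ℝ) < 11/5)]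
      linarith
    linarith
  · -- upper bound
    apply csSup_le
    · exact ⟨_, ⟨1, by norm_num, rfl⟩⟩
    · rintro b ⟨a, ha, rfl⟩
      exact key_upper a ha
end

section
/- Let F(u) := sup_{a>0} log(1 + u(1 − e^{−a})) / ( e^{a} (1 + u(1 − e^{−a})) ). Then 1.1462 · F(1.1462) ≥ 0.1793. In particular, for the hard-core gas (B = 0, C(β) = |B_r|) the new convergence radius ρ* = 1.1462 · F(1.1462)/|B_r| exceeds the classical one ρ*₁ = F(1)/|B_r| ≤ 0.1449/|B_r|. -/
/-!
Substituting t = e^{-a} turns the quantity under the supremum into t log S / S with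
S = 1 + u(1 - t), t ∈ (0, 1). For the lower bound take t with S = √2, where the logarithm is
log 2 / 2 and the value is exact. For the upper bound at u = 1 the claim t log(2 - t) ≤
0.1449 (2 - t) follows from 2 - t ≤ exp y, y = 0.1449 (2 - t) / t, and the fourth-order Taylor
polynomial of exp already suffices: after clearing t⁴ it is a polynomial inequality on (0, 1)
(tight near t ≈ 0.63).
-/

open Real Set

/-- The quantity under the supremum defining `Fsup u`, in the variable `t = exp (-a)`. -/
noncomputable def fsupTerm (u t : ℝ) : ℝ :=
  t * log (1 + u * (1 - t)) / (1 + u * (1 - t))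

lemma Fsup_eq_sSup_fsupTerm (u : ℝ) : Fsup u = sSup (fsupTerm u '' Ioo 0 1) := by
  have hsub : (fun a : ℝ => exp (-a)) '' Ioi 0 = Ioo 0 1 := by
    rw [← exp_zero, ← image_exp_Iio, show Iio (0 : ℝ) = Neg.neg '' Ioi 0 by simp, image_image]
  have hterm : ∀ a : ℝ, log (1 + u * (1 - exp (-a))) / (exp a * (1 + u * (1 - exp (-a)))) =
      fsupTerm u (exp (-a)) := by
    intro a
    rw [fsupTerm, exp_neg]
    field_simp
  rw [Fsup, ← hsub, image_image]
  simp only [hterm]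

lemma fsupTerm_le_one {u t : ℝ} (hu : 0 ≤ u) (ht : t ∈ Ioo 0 1) : fsupTerm u t ≤ 1 := by
  obtain ⟨ht0, ht1⟩ := ht
  have hS : 1 ≤ 1 + u * (1 - t) := le_add_of_nonneg_right (mul_nonneg hu (by linarith))
  have hlog : log (1 + u * (1 - t)) ≤ 1 + u * (1 - t) := by
    linarith [log_le_sub_one_of_pos (by linarith : 0 < 1 + u * (1 - t))]
  rw [fsupTerm, div_le_one (by linarith)]
  nlinarith [log_nonneg hS]

lemma fsupTerm_le_Fsup {u t : ℝ} (hu : 0 ≤ u) (ht : t ∈ Ioo 0 1) : fsupTerm u t ≤ Fsup u := by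
  rw [Fsup_eq_sSup_fsupTerm]
  refine le_csSup ⟨1, ?_⟩ (mem_image_of_mem _ ht)
  rintro _ ⟨s, hs, rfl⟩
  exact fsupTerm_le_one hu hs

lemma Fsup_le {u c : ℝ} (h : ∀ t ∈ Ioo 0 1, fsupTerm u t ≤ c) : Fsup u ≤ c := by
  rw [Fsup_eq_sSup_fsupTerm]
  refine csSup_le (nonempty_Ioo.2 one_pos |>.image _) ?_
  rintro _ ⟨t, ht, rfl⟩
  exact h t ht

lemma mul_fsupTerm_sqrt_two {u : ℝ} (hu : u ≠ 0) :
    u * fsupTerm u (1 - (√2 - 1) / u) = ((u + 1) / √2 - 1) * log 2 / 2 := by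
  have hS : 1 + u * (1 - (1 - (√2 - 1) / u)) = √2 := by field_simp; ring
  have hlog : log √2 = log 2 / 2 := by
    rw [log_sqrt zero_le_two]
  rw [fsupTerm, hS, hlog]
  field_simp
  ring

lemma taylor_four_le_exp {y : ℝ} (hy : 0 ≤ y) :
    1 + y + y ^ 2 / 2 + y ^ 3 / 6 + y ^ 4 / 24 ≤ exp y := by
  have h := sum_le_exp_of_nonneg hy 5
  simp only [Finset.sum_range_succ, Finset.sum_range_zero, Nat.factorial] at h
  norm_num at h
  linarith

lemma log_two_sub_le {t : ℝ} (ht : t ∈ Ioo 0 1) : log (2 - t) ≤ 0.1449 * (2 - t) / t := by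
  obtain ⟨ht0, ht1⟩ := ht
  set y := 0.1449 * (2 - t) / t
  have hyt : y * t = 0.1449 * (2 - t) := div_mul_cancel₀ _ ht0.ne'
  rw [log_le_iff_le_exp (by linarith)]
  refine le_trans ?_ (taylor_four_le_exp (div_nonneg (by linarith) ht0.le))
  refine le_of_mul_le_mul_right ?_ (pow_pos ht0 4)
  have expand : (1 + y + y ^ 2 / 2 + y ^ 3 / 6 + y ^ 4 / 24) * t ^ 4 =
      t ^ 4 + (y * t) * t ^ 3 + (y * t) ^ 2 * t ^ 2 / 2 + (y * t) ^ 3 * t / 6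
        + (y * t) ^ 4 / 24 := by ring
  rw [expand, hyt]
  nlinarith [sq_nonneg (t - 0.63), mul_pos ht0 ht0, mul_pos ht0 (sub_pos.2 ht1),
    sq_nonneg ((t - 0.63) * t)]

lemma Fsup_one_le : Fsup 1 ≤ 0.1449 := by
  refine Fsup_le fun t ht => ?_
  have hS : 1 + 1 * (1 - t) = 2 - t := by ring
  rw [fsupTerm, hS, div_le_iff₀ (by linarith [ht.2]), mul_comm t, ← le_div_iff₀ ht.1]
  exact log_two_sub_le ht

lemma le_mul_Fsup : (0.1793 : ℝ) ≤ 1.1462 * Fsup 1.1462 := by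
  have hsqrt : √2 < 1.41422 := by
    rw [sqrt_lt' (by norm_num)]; norm_num
  have hsqrt1 : 1 < √2 := by
    rw [lt_sqrt zero_le_one]; norm_num
  have ht : 1 - (√2 - 1) / 1.1462 ∈ Ioo (0 : ℝ) 1 := by
    constructor
    · rw [sub_pos, div_lt_one (by norm_num)]; linarith
    · rw [sub_lt_self_iff]; exact div_pos (by linarith) (by norm_num)
  have hquot : 0.5175 ≤ (1.1462 + 1) / √2 - 1 := by
    rw [le_sub_iff_add_le, le_div_iff₀ (by positivity)]
    linarith
  have hlog2 := log_two_gt_d9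
  calc (0.1793 : ℝ) ≤ 0.5175 * 0.6931471803 / 2 := by norm_num
    _ ≤ ((1.1462 + 1) / √2 - 1) * log 2 / 2 := by gcongr
    _ = 1.1462 * fsupTerm 1.1462 (1 - (√2 - 1) / 1.1462) :=
        (mul_fsupTerm_sqrt_two (by norm_num)).symm
    _ ≤ 1.1462 * Fsup 1.1462 := by gcongr; exact fsupTerm_le_Fsup (by norm_num) ht

/-- 1.1462 · F(1.1462) ≥ 0.1793; hence the new hard-core radius
exceeds the classical one F(1)/|B_r| ≤ 0.1449/|B_r|. -/
theorem stmt_14 :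
    (0.1793 : ℝ) ≤ 1.1462 * Fsup 1.1462 ∧
      ∀ vol : ℝ, 0 < vol →
        Fsup 1 / vol ≤ (0.1449 : ℝ) / vol ∧
          Fsup 1 / vol < 1.1462 * Fsup 1.1462 / vol := by
  have hF1 : Fsup 1 < 1.1462 * Fsup 1.1462 := by linarith [Fsup_one_le, le_mul_Fsup]
  refine ⟨le_mul_Fsup, fun vol hvol => ⟨?_, ?_⟩⟩
  · exact div_le_div_of_nonneg_right Fsup_one_le hvol.le
  · exact div_lt_div_of_pos_right hF1 hvol
end

section
/- For every integer n ≥ 1, the signed sum over all connected simple graphs on the labeled vertex set {1,…,n} satisfies Σ_{g ∈ C_n} (−1)^{|E(g)|} = (−1)^{n−1} (n−1)!, where C_n is the family of connected simple graphs on {1,…,n} and |E(g)| is the number of edges of g. -/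
/-!
Write `c(V)` for the signed count of connected graphs on a finite type `V`. For `|V| ≥ 2`,
toggling a fixed edge is a sign-reversing involution on all graphs on `V`, so their signed count
vanishes. Sort these graphs by the vertex set `S` of the component of a fixed vertex `v`. If two
vertices `a ≠ b` lie outside `S`, toggling `ab` preserves the fibre over `S`, which therefore
contributes nothing. The fibre over `S = V` contributes `c(V)`, and the fibre over `S = V \ {w}`
consists of the connected graphs on `V \ {w}` with `w` added as an isolated vertex, so it
contributes `c(V \ {w})`. Hence `c(V) = -(|V| - 1) c(V \ {w})`, and induction on `|V|` gives
`c(V) = (-1)^(|V|-1) (|V|-1)!`.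
-/

open Finset
open scoped symmDiff Nat

theorem Set.neg_one_pow_ncard_symmDiff_singleton {α R : Type*} [Ring R] {s : Set α}
    (hs : s.Finite) (x : α) : (-1 : R) ^ (s ∆ {x}).ncard = -(-1) ^ s.ncard := by
  by_cases hx : x ∈ s
  · have hdiff : s ∆ {x} = s \ {x} := by
      ext y; by_cases hy : y = x <;> simp_all [Set.mem_symmDiff]
    rw [hdiff, ← Set.ncard_sdiff_singleton_add_one hx hs, pow_succ, mul_neg_one, neg_neg]
  · have hinsert : s ∆ {x} = insert x s := by
      ext y; by_cases hy : y = x <;> simp_all [Set.mem_symmDiff]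
    rw [hinsert, Set.ncard_insert_of_notMem hx hs, pow_succ, mul_neg_one]

namespace SimpleGraph

variable {V : Type*}

theorem edgeSet_symmDiff (G H : SimpleGraph V) : (G ∆ H).edgeSet = G.edgeSet ∆ H.edgeSet := by
  rw [symmDiff_def, symmDiff_def, edgeSet_sup, edgeSet_sdiff, edgeSet_sdiff]
  rfl

theorem edge_ne_bot {a b : V} (hab : a ≠ b) : edge a b ≠ ⊥ := fun h => by
  simpa [h] using (edge_adj a b a b).2 ⟨Or.inl ⟨rfl, rfl⟩, hab⟩

theorem ncard_edgeSet_map {W : Type*} (f : V ↪ W) (G : SimpleGraph V) :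
    (G.map f).edgeSet.ncard = G.edgeSet.ncard := by
  rw [edgeSet_map, Set.ncard_image_of_injective _ f.sym2Map.injective]

theorem neg_one_pow_ncard_edgeSet_symmDiff_edge [Finite V] {R : Type*} [Ring R]
    (G : SimpleGraph V) {a b : V} (hab : a ≠ b) :
    (-1 : R) ^ (G ∆ edge a b).edgeSet.ncard = -(-1) ^ G.edgeSet.ncard := by
  rw [edgeSet_symmDiff, edgeSet_edge_of_ne hab]
  exact Set.neg_one_pow_ncard_symmDiff_singleton (Set.toFinite _) _

theorem sum_neg_one_pow_ncard_edgeSet_eq_zero [Finite V] {s : Finset (SimpleGraph V)} {a b : V}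
    (hab : a ≠ b) (hs : ∀ G ∈ s, G ∆ edge a b ∈ s) :
    ∑ G ∈ s, (-1 : ℤ) ^ G.edgeSet.ncard = 0 :=
  sum_involution (fun G _ => G ∆ edge a b)
    (fun G _ => by rw [neg_one_pow_ncard_edgeSet_symmDiff_edge G hab, add_neg_cancel])
    (fun G _ _ => by rw [Ne, symmDiff_eq_left]; exact edge_ne_bot hab) hs
    (fun G _ => symmDiff_symmDiff_cancel_right _ _)

theorem mem_supp_connectedComponentMk_iff {G : SimpleGraph V} {v w : V} :
    w ∈ (G.connectedComponentMk v).supp ↔ G.Reachable v w := by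
  rw [ConnectedComponent.mem_supp_iff, ConnectedComponent.eq, reachable_comm]

theorem Reachable.of_le_sup_edge {G H : SimpleGraph V} {v w a b : V} (hle : G ≤ H ⊔ edge a b)
    (ha : ¬H.Reachable v a) (hb : ¬H.Reachable v b) (h : G.Reachable v w) : H.Reachable v w := by
  suffices ∀ x, G.Walk x w → H.Reachable v x → H.Reachable v w from h.elim (this v · .rfl)
  intro x q
  clear h
  induction q with
  | nil => exact id
  | @cons x y _ hxy _ ih =>
    intro hx
    rcases hle hxy with hxy | hxy
    · exact ih (hx.trans hxy.reachable)
    · rcases (edge_adj a b x y).1 hxy with ⟨⟨rfl, rfl⟩ | ⟨rfl, rfl⟩, -⟩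
      exacts [(ha hx).elim, (hb hx).elim]

theorem supp_connectedComponentMk_symmDiff_edge {G : SimpleGraph V} {v a b : V}
    (ha : a ∉ (G.connectedComponentMk v).supp) (hb : b ∉ (G.connectedComponentMk v).supp) :
    ((G ∆ edge a b).connectedComponentMk v).supp = (G.connectedComponentMk v).supp := by
  simp only [mem_supp_connectedComponentMk_iff] at ha hb
  have hle : ∀ {w}, (G ∆ edge a b).Reachable v w → G.Reachable v w :=
    Reachable.of_le_sup_edge symmDiff_le_sup ha hb
  ext w
  simp only [mem_supp_connectedComponentMk_iff]
  exact ⟨hle, Reachable.of_le_sup_edge (le_symmDiff_sup_right _ _) (mt hle ha) (mt hle hb)⟩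

theorem support_subset_of_supp_eq_compl_singleton {G : SimpleGraph V} {C : G.ConnectedComponent}
    {w : V} (hC : C.supp = {w}ᶜ) : G.support ⊆ {w}ᶜ := by
  rintro x ⟨y, hxy⟩ (hx : x = w)
  have hy : y ∉ C.supp := fun hy => by simpa [hC, hx] using (C.mem_supp_congr_adj hxy).2 hy
  have hyw : y = w := by simpa [hC] using hy
  exact hxy.ne (hx.trans hyw.symm)

theorem supp_connectedComponentMk_eq_iff {G : SimpleGraph V} {v : V} {S : Set V}
    (hG : G.support ⊆ S) (hv : v ∈ S) :
    (G.connectedComponentMk v).supp = S ↔ (G.induce S).Connected := by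
  refine ⟨by rintro rfl; exact ConnectedComponent.connected_toSimpleGraph _, fun hS => ?_⟩
  ext w
  rw [mem_supp_connectedComponentMk_iff]
  refine ⟨fun hvw => ?_, fun hw => ?_⟩
  · obtain ⟨p⟩ := hvw.symm
    cases p with
    | nil => exact hv
    | cons hadj _ => exact hG ⟨_, hadj⟩
  · exact (hS.preconnected ⟨v, hv⟩ ⟨w, hw⟩).map (Embedding.induce S).toHom

section Fintype

variable [Fintype V] [DecidableEq V]

theorem sum_filter_support_subset {M : Type*} [AddCommMonoid M]
    (S : Set V) [DecidablePred (· ∈ S)] (P : SimpleGraph S → Prop) [DecidablePred P]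
    [DecidablePred fun G : SimpleGraph V => G.support ⊆ S ∧ P (G.induce S)]
    (f : SimpleGraph V → M) :
    ∑ G : SimpleGraph V with G.support ⊆ S ∧ P (G.induce S), f G
      = ∑ H : SimpleGraph S with P H, f H.spanningCoe := by
  refine sum_nbij' (induce S) spanningCoe (fun G hG => ?_) (fun H hH => ?_)
    (fun G hG => ?_) (fun H _ => induce_spanningCoe) (fun G hG => ?_)
  · simp only [mem_filter, mem_univ, true_and] at hG ⊢
    exact hG.2
  · simp only [mem_filter, mem_univ, true_and] at hH ⊢
    refine ⟨?_, by rwa [induce_spanningCoe]⟩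
    rw [support_spanningCoe]
    exact Set.image_subset_iff.2 fun x _ => x.2
  · simp only [mem_filter, mem_univ, true_and] at hG
    exact (G.spanningCoe_induce_eq_self S).2 hG.1
  · simp only [mem_filter, mem_univ, true_and] at hG
    rw [(G.spanningCoe_induce_eq_self S).2 hG.1]

open scoped Classical in
noncomputable def connectedSignSum (V : Type*) [Fintype V] [DecidableEq V] : ℤ :=
  ∑ G : SimpleGraph V with G.Connected, (-1) ^ G.edgeSet.ncard

open scoped Classical in
noncomputable def componentSignSum (v : V) (S : Set V) : ℤ :=
  ∑ G : SimpleGraph V with (G.connectedComponentMk v).supp = S, (-1) ^ G.edgeSet.ncard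

theorem connectedSignSum_of_card_eq_one (h : Fintype.card V = 1) : connectedSignSum V = 1 := by
  classical
  have : Subsingleton V := Fintype.card_le_one_iff_subsingleton.1 h.le
  have : Nonempty V := Fintype.card_pos_iff.1 (by omega)
  rw [connectedSignSum, filter_true_of_mem fun G _ => ⟨.of_subsingleton⟩, univ_unique,
    sum_singleton]
  simp

theorem sum_componentSignSum [Nontrivial V] (v : V) : ∑ S, componentSignSum v S = 0 := by
  obtain ⟨a, b, hab⟩ := exists_pair_ne V
  simp only [componentSignSum]
  rw [sum_fiberwise]
  exact sum_neg_one_pow_ncard_edgeSet_eq_zero hab fun G _ => mem_univ _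

theorem componentSignSum_univ (v : V) : componentSignSum v Set.univ = connectedSignSum V := by
  unfold componentSignSum connectedSignSum
  congr 1
  ext G
  simp only [mem_filter, mem_univ, true_and, Set.eq_univ_iff_forall,
    mem_supp_connectedComponentMk_iff]
  exact ⟨fun h => (connected_iff_exists_forall_reachable _).2 ⟨v, h⟩, fun h => h.preconnected v⟩

theorem componentSignSum_of_notMem {v : V} {S : Set V} (hv : v ∉ S) :
    componentSignSum v S = 0 := by
  refine sum_eq_zero fun G hG => absurd ?_ hv
  rw [(mem_filter.1 hG).2.symm]
  exact ConnectedComponent.connectedComponentMk_mem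

theorem componentSignSum_of_ne {v a b : V} {S : Set V} (ha : a ∉ S) (hb : b ∉ S) (hab : a ≠ b) :
    componentSignSum v S = 0 := by
  refine sum_neg_one_pow_ncard_edgeSet_eq_zero hab fun G hG => ?_
  rw [mem_filter] at hG ⊢
  refine ⟨mem_univ _, ?_⟩
  rw [← hG.2] at ha hb
  rw [supp_connectedComponentMk_symmDiff_edge ha hb, hG.2]

theorem componentSignSum_compl_singleton {v w : V} (hwv : w ≠ v) :
    componentSignSum v {w}ᶜ = connectedSignSum ({w}ᶜ : Set V) := by
  classical
  have hv : v ∈ ({w}ᶜ : Set V) := hwv.symm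
  have hfiber : ∀ G : SimpleGraph V, (G.connectedComponentMk v).supp = {w}ᶜ ↔
      G.support ⊆ {w}ᶜ ∧ (G.induce {w}ᶜ).Connected := fun G =>
    ⟨fun h => ⟨support_subset_of_supp_eq_compl_singleton h,
      (supp_connectedComponentMk_eq_iff (support_subset_of_supp_eq_compl_singleton h) hv).1 h⟩,
     fun h => (supp_connectedComponentMk_eq_iff h.1 hv).2 h.2⟩
  unfold componentSignSum connectedSignSum
  simp_rw [hfiber]
  rw [sum_filter_support_subset]
  simp_rw [ncard_edgeSet_map]

theorem connectedSignSum_add_sum_compl_singleton [Nontrivial V] (v : V) :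
    connectedSignSum V + ∑ w ∈ univ.erase v, connectedSignSum ({w}ᶜ : Set V) = 0 := by
  set T : Finset (Set V) := insert Set.univ ((univ.erase v).image fun w => {w}ᶜ)
  have hT : ∀ S ∉ T, componentSignSum v S = 0 := by
    intro S hS
    by_cases hvS : v ∈ S
    swap
    · exact componentSignSum_of_notMem hvS
    obtain ⟨a, ha, b, hb, hab⟩ : Sᶜ.Nontrivial := by
      rw [← Set.not_subsingleton_iff]
      intro hsub
      rcases hsub.eq_empty_or_singleton with h | ⟨a, h⟩
      · exact hS (mem_insert.2 (.inl (Set.compl_empty_iff.1 h)))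
      · have hav : a ≠ v := fun hav => (h ▸ rfl : a ∈ Sᶜ) (hav ▸ hvS)
        exact hS (mem_insert_of_mem (mem_image.2 ⟨a, mem_erase.2 ⟨hav, mem_univ _⟩,
          by rw [← h, compl_compl]⟩))
    exact componentSignSum_of_ne ha hb hab
  have hnotMem : Set.univ ∉ (univ.erase v).image fun w : V => ({w}ᶜ : Set V) := by
    simp
  calc connectedSignSum V + ∑ w ∈ univ.erase v, connectedSignSum ({w}ᶜ : Set V)
      = ∑ S ∈ T, componentSignSum v S := by
        rw [sum_insert hnotMem,
          sum_image fun _ _ _ _ h => Set.singleton_injective (compl_injective h),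
          componentSignSum_univ]
        exact congrArg _ (sum_congr rfl fun w hw =>
          (componentSignSum_compl_singleton (mem_erase.1 hw).1).symm)
    _ = ∑ S, componentSignSum v S := sum_subset (subset_univ T) fun S _ hS => hT S hS
    _ = 0 := sum_componentSignSum v

theorem connectedSignSum_of_card_eq (n : ℕ) (h : Fintype.card V = n + 1) :
    connectedSignSum V = (-1) ^ n * n ! := by
  induction n generalizing V with
  | zero => simpa using connectedSignSum_of_card_eq_one h
  | succ n ih =>
    have : Nontrivial V := Fintype.one_lt_card_iff_nontrivial.1 (by omega)
    obtain ⟨v⟩ := ‹Nontrivial V›.to_nonempty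
    have hrec := connectedSignSum_add_sum_compl_singleton v
    rw [sum_congr rfl fun w _ => ih (by simp [filter_ne', h]), sum_const,
      card_erase_of_mem (mem_univ v), card_univ, h, nsmul_eq_mul] at hrec
    rw [Nat.factorial_succ, pow_succ]
    push_cast at hrec ⊢
    linear_combination hrec

end Fintype

end SimpleGraph

open scoped Classical in
/-- Σ_{g ∈ C_n} (-1)^{|E(g)|} = (-1)^{n-1} (n-1)!. -/
theorem stmt_16 (n : ℕ) (hn : 1 ≤ n) :
    ∑ g ∈ Finset.univ.filter (fun g : SimpleGraph (Fin n) => g.Connected),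
        (-1 : ℤ) ^ g.edgeSet.ncard
      = (-1) ^ (n - 1) * (Nat.factorial (n - 1) : ℤ) := by
  obtain ⟨m, rfl⟩ := Nat.exists_eq_add_of_le' hn
  exact SimpleGraph.connectedSignSum_of_card_eq m (Fintype.card_fin _)
end
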